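/- Let k ≥ 0 and r ∈ ℝ and suppose the Chialvo map f = f_{r,k}, f(x) = x²·exp(r − x) + k, satisfies f²(2) < f³(2) < 2 < f(2). Then f is chaotic in the sense of Devaney on I = [f²(2), f(2)]: there exists a nonempty compact set Y ⊆ I with f(Y) ⊆ Y such that (1) f restricted to Y is topologically transitive (for all nonempty relatively open subsets U, V of Y there exists n ≥ 0 with f^n(U) ∩ V ≠ ∅), (2) the set of periodic points of f lying in Y is dense in Y, and (3) f restricted to Y has sensitive dependence on initial conditions: there exists δ > 0 such that for every x ∈ Y and every ε > 0 there exist y ∈ Y and n ≥ 0 with |x − y| < ε and |f^n(x) − f^n(y)| ≥ δ. -/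

import Mathlib

/-!
The hypotheses `f²(2) < f³(2) < 2 < f(2)` give, by the intermediate value theorem, two disjoint
intervals `[2, β]` and `[α, t]` that `f²` maps monotonically over their hull `[2, t]`: a
horseshoe. The points whose `f²`-orbit stays in these intervals split into fibers indexed by
itineraries in `{0, 1}^ℕ`, each a compact interval. The condensation points of the set of fiber
endpoints form a compact `f²`-invariant set `E` on which `f²` is transitive, has dense periodic
points (endpoints of fibers with periodic itinerary) and is sensitive, the separation being the
gap between the two intervals. Then `Y = E ∪ f(E)` inherits these properties for `f`.
-/

open Set Function Metric Filter Topology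

lemma not_countable_nat_to_bool : ¬ Countable (ℕ → Bool) := fun h => by
  classical
  obtain ⟨e, he⟩ := Countable.exists_injective_nat (ℕ → Bool)
  refine cantor_injective (fun s : Set ℕ => e fun n => decide (n ∈ s))
    (he.comp fun s t hst => ?_)
  ext n
  simpa using congrFun hst n

lemma Set.nonempty_diff_of_not_countable {α : Type*} {s t : Set α} (hs : ¬ s.Countable)
    (ht : t.Countable) : (s \ t).Nonempty :=
  nonempty_iff_ne_empty.2 fun h => hs (ht.mono (sdiff_eq_empty.1 h))

lemma Set.Finite.subset_periodicPts {α : Type*} {h : α → α} {T : Set α} (hT : T.Finite)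
    (hmaps : MapsTo h T T) (hinj : InjOn h T) : T ⊆ periodicPts h := by
  intro x hx
  have : Finite T := hT
  obtain ⟨n, hn, hper⟩ := (hmaps.restrict_inj.2 hinj).mem_periodicPts ⟨x, hx⟩
  refine ⟨n, hn, ?_⟩
  have := congrArg Subtype.val hper.eq
  rwa [hmaps.iterate_restrict] at this

def takeAppend {α : Type*} (s : ℕ → α) (n : ℕ) (t : ℕ → α) : ℕ → α :=
  fun i => if i < n then s i else t (i - n)

section takeAppend

variable {α : Type*} (s t : ℕ → α) (n : ℕ)

lemma takeAppend_of_lt {i : ℕ} (hi : i < n) : takeAppend s n t i = s i := if_pos hi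

lemma takeAppend_add (i : ℕ) : takeAppend s n t (i + n) = t i := by
  simp [takeAppend]

end takeAppend

section Condensation

variable {X : Type*} [TopologicalSpace X]

def condensationPoints (S : Set X) : Set X := {x | ∀ U ∈ 𝓝 x, ¬ (S ∩ U).Countable}

lemma isClosed_condensationPoints (S : Set X) : IsClosed (condensationPoints S) := by
  refine isOpen_compl_iff.1 (isOpen_iff_mem_nhds.2 fun x hx => ?_)
  simp only [condensationPoints, mem_compl_iff, mem_ofPred_eq, not_forall, not_not] at hx
  obtain ⟨U, hU, hcount⟩ := hx
  filter_upwards [eventually_eventually_nhds.2 hU] with y hy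
  exact fun hy' => hy' U hy hcount

lemma condensationPoints_subset_closure (S : Set X) : condensationPoints S ⊆ closure S :=
  fun _ hx => mem_closure_iff_nhds.2 fun U hU =>
    inter_comm S U ▸ nonempty_iff_ne_empty.2 fun h => hx U hU (h ▸ countable_empty)

lemma countable_diff_condensationPoints [SecondCountableTopology X] (S : Set X) :
    (S \ condensationPoints S).Countable := by
  have hloc : ∀ x ∈ S \ condensationPoints S, ∃ U ∈ 𝓝 x, (S ∩ U).Countable := by
    intro x hx
    simpa [condensationPoints] using hx.2
  choose! U hU hcount using hloc
  obtain ⟨T, hTS, hTcount, hcover⟩ := TopologicalSpace.countable_cover_nhdsWithin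
    fun x hx => mem_nhdsWithin_of_mem_nhds (hU x hx)
  refine (hTcount.biUnion fun x hx => hcount x (hTS hx)).mono fun y hy => ?_
  obtain ⟨x, hx, hyx⟩ := mem_iUnion₂.1 (hcover hy)
  exact mem_biUnion hx ⟨hy.1, hyx⟩

lemma not_countable_condensationPoints_inter [SecondCountableTopology X] {S T : Set X}
    (h : ¬ (S ∩ T).Countable) : ¬ (condensationPoints S ∩ T).Countable := fun hc =>
  h <| (hc.union (countable_diff_condensationPoints S)).mono fun x hx =>
    (em (x ∈ condensationPoints S)).imp (fun hxc => ⟨hxc, hx.2⟩) fun hxc => ⟨hx.1, hxc⟩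

end Condensation

/-- Transitivity and sensitivity are witnessed at positive times, so that the notion passes from
`g^[2]` to `g` (`IsDevaneyChaoticOn.of_iterate_two`). -/
structure IsDevaneyChaoticOn {α : Type*} [PseudoMetricSpace α] (g : α → α) (E : Set α) :
    Prop where
  mapsTo : MapsTo g E E
  transitive : ∀ U V : Set α, IsOpen U → IsOpen V → (U ∩ E).Nonempty →
    (V ∩ E).Nonempty → ∃ n, 0 < n ∧ ∃ x ∈ U ∩ E, g^[n] x ∈ V
  subset_closure_periodicPts : E ⊆ closure (E ∩ periodicPts g)
  sensitive : ∃ δ > 0, ∀ x ∈ E, ∀ ε > 0, ∃ y ∈ E, dist x y < ε ∧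
    ∃ n, 0 < n ∧ δ ≤ dist (g^[n] x) (g^[n] y)

section Iterate

variable {α : Type*} {f : α → α}

lemma mem_union_image_iff_exists_iterate {E : Set α} {y : α} :
    y ∈ E ∪ f '' E ↔ ∃ i < 2, ∃ x ∈ E, f^[i] x = y := by
  constructor
  · rintro (hy | ⟨x, hx, rfl⟩)
    exacts [⟨0, two_pos, y, hy, rfl⟩, ⟨1, one_lt_two, x, hx, rfl⟩]
  · rintro ⟨_ | _ | _, hi, x, hx, rfl⟩
    exacts [Or.inl hx, Or.inr ⟨x, hx, rfl⟩, by omega]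

lemma iterate_sub_apply_iterate {i m : ℕ} (h : i ≤ m) (x : α) :
    f^[m - i] (f^[i] x) = f^[m] x := by
  rw [← iterate_add_apply, Nat.sub_add_cancel h]

lemma mem_periodicPts_of_mem_periodicPts_iterate {m : ℕ} (hm : 0 < m) {x : α}
    (hx : x ∈ periodicPts f^[m]) : x ∈ periodicPts f := by
  obtain ⟨n, hn, hper⟩ := hx
  exact mk_mem_periodicPts (Nat.mul_pos hm hn) (by rw [IsPeriodicPt, iterate_mul]; exact hper)

end Iterate

namespace IsDevaneyChaoticOn

variable {α : Type*} [PseudoMetricSpace α] {f : α → α} {E : Set α}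

theorem of_iterate_two (hf : Continuous f) (h : IsDevaneyChaoticOn f^[2] E) :
    IsDevaneyChaoticOn f (E ∪ f '' E) where
  mapsTo := by
    rintro _ (hx | ⟨x, hx, rfl⟩)
    exacts [Or.inr (mem_image_of_mem f hx), Or.inl (h.mapsTo hx)]
  transitive U V hU hV hUE hVE := by
    obtain ⟨_, hyU, hy⟩ := hUE
    obtain ⟨i, hi, x, hx, rfl⟩ := mem_union_image_iff_exists_iterate.1 hy
    obtain ⟨_, hzV, hz⟩ := hVE
    obtain ⟨j, hj, z, hzE, rfl⟩ := mem_union_image_iff_exists_iterate.1 hz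
    obtain ⟨n, hn, w, ⟨hwU, hwE⟩, hwV⟩ := h.transitive _ _ (hU.preimage (hf.iterate i))
      (hV.preimage (hf.iterate j)) ⟨x, hyU, hx⟩ ⟨z, hzV, hzE⟩
    refine ⟨2 * n + j - i, by omega, f^[i] w,
      ⟨hwU, mem_union_image_iff_exists_iterate.2 ⟨i, hi, w, hwE, rfl⟩⟩, ?_⟩
    rwa [iterate_sub_apply_iterate (by omega), add_comm, iterate_add_apply, iterate_mul]
  subset_closure_periodicPts := by
    have hper : f '' (E ∩ periodicPts f^[2]) ⊆ (E ∪ f '' E) ∩ periodicPts f := by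
      rintro _ ⟨x, hx, rfl⟩
      exact ⟨Or.inr (mem_image_of_mem f hx.1),
        Semiconj.mapsTo_periodicPts (Function.Commute.refl f)
          (mem_periodicPts_of_mem_periodicPts_iterate two_pos hx.2)⟩
    have hE : E ∩ periodicPts f^[2] ⊆ (E ∪ f '' E) ∩ periodicPts f := fun x hx =>
      ⟨Or.inl hx.1, mem_periodicPts_of_mem_periodicPts_iterate two_pos hx.2⟩
    rintro _ (hx | ⟨x, hx, rfl⟩)
    · exact closure_mono hE (h.subset_closure_periodicPts hx)
    · exact closure_mono hper (image_closure_subset_closure_image hf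
        (mem_image_of_mem f (h.subset_closure_periodicPts hx)))
  sensitive := by
    obtain ⟨δ, hδ, hsens⟩ := h.sensitive
    refine ⟨δ, hδ, fun y hy ε hε => ?_⟩
    obtain ⟨i, hi, x, hx, rfl⟩ := mem_union_image_iff_exists_iterate.1 hy
    obtain ⟨η, hη, hcont⟩ := Metric.continuous_iff.1 (hf.iterate i) x ε hε
    obtain ⟨z, hz, hxz, n, hn, hsep⟩ := hsens x hx η hη
    refine ⟨f^[i] z, mem_union_image_iff_exists_iterate.2 ⟨i, hi, z, hz, rfl⟩, ?_,
      2 * n - i, by omega, ?_⟩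
    · rw [dist_comm] at hxz ⊢
      exact hcont z hxz
    · rwa [iterate_sub_apply_iterate (by omega), iterate_sub_apply_iterate (by omega),
        iterate_mul]

end IsDevaneyChaoticOn

structure Horseshoe (g : ℝ → ℝ) where
  p : ℝ
  q : ℝ
  u : ℝ
  v : ℝ
  p_le_q : p ≤ q
  q_lt_u : q < u
  u_le_v : u ≤ v
  continuous : Continuous g
  monotone_left : StrictMonoOn g (Icc p q) ∨ StrictAntiOn g (Icc p q)
  monotone_right : StrictMonoOn g (Icc u v) ∨ StrictAntiOn g (Icc u v)
  subset_image_left : Icc p v ⊆ g '' Icc p q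
  subset_image_right : Icc p v ⊆ g '' Icc u v

namespace Horseshoe

variable {g : ℝ → ℝ} (H : Horseshoe g)

def branch : Bool → Set ℝ
  | false => Icc H.p H.q
  | true => Icc H.u H.v

def cylinder (s : ℕ → Bool) (n : ℕ) : Set ℝ :=
  {x | (∀ i < n, g^[i] x ∈ H.branch (s i)) ∧ g^[n] x ∈ Icc H.p H.v}

def fiber (s : ℕ → Bool) : Set ℝ := {x | ∀ n, g^[n] x ∈ H.branch (s n)}

def endpoints : Set ℝ := {x | ∃ s, IsLeast (H.fiber s) x ∨ IsGreatest (H.fiber s) x}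

/-- A fiber may be a nondegenerate interval, on which `g` is not sensitive: hence only the fiber
endpoints are kept, and among them only the condensation points, so as to leave no isolated
points. -/
def core : Set ℝ := condensationPoints H.endpoints

section Branch

variable (a : Bool)

lemma branch_subset_Icc : H.branch a ⊆ Icc H.p H.v := by
  cases a
  · exact Icc_subset_Icc le_rfl (H.q_lt_u.le.trans H.u_le_v)
  · exact Icc_subset_Icc (H.p_le_q.trans H.q_lt_u.le) le_rfl

lemma isClosed_branch : IsClosed (H.branch a) := by
  cases a <;> exact isClosed_Icc

lemma ordConnected_branch : (H.branch a).OrdConnected := by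
  cases a <;> exact ordConnected_Icc

lemma strictMonoOn_or_strictAntiOn_branch :
    StrictMonoOn g (H.branch a) ∨ StrictAntiOn g (H.branch a) := by
  cases a
  exacts [H.monotone_left, H.monotone_right]

lemma injOn_branch : InjOn g (H.branch a) :=
  (H.strictMonoOn_or_strictAntiOn_branch a).elim StrictMonoOn.injOn StrictAntiOn.injOn

lemma subset_image_branch : Icc H.p H.v ⊆ g '' H.branch a := by
  cases a
  exacts [H.subset_image_left, H.subset_image_right]

lemma le_dist_of_mem_branch {a b : Bool} (hab : a ≠ b) {x y : ℝ} (hx : x ∈ H.branch a)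
    (hy : y ∈ H.branch b) : H.u - H.q ≤ dist x y := by
  have := H.q_lt_u
  rw [Real.dist_eq]
  cases a <;> cases b <;> simp only [branch, mem_Icc, ne_eq, not_true_eq_false] at hab hx hy
  · rw [abs_sub_comm, abs_of_nonneg (by linarith)]; linarith
  · rw [abs_of_nonneg (by linarith)]; linarith

end Branch

section Fiber

variable (s : ℕ → Bool)

lemma fiber_subset_branch : H.fiber s ⊆ H.branch (s 0) := fun _ hx => hx 0

lemma fiber_subset_Icc : H.fiber s ⊆ Icc H.p H.v :=
  (H.fiber_subset_branch s).trans (H.branch_subset_Icc _)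

lemma isCompact_fiber : IsCompact (H.fiber s) := by
  refine isCompact_Icc.of_isClosed_subset ?_ (H.fiber_subset_Icc s)
  rw [fiber, ofPred_forall]
  exact isClosed_iInter fun n => (H.isClosed_branch _).preimage (H.continuous.iterate n)

lemma eq_of_mem_fiber {s' : ℕ → Bool} {x : ℝ} (hx : x ∈ H.fiber s)
    (hx' : x ∈ H.fiber s') : s = s' := by
  by_contra hne
  obtain ⟨n, hn⟩ := Function.ne_iff.1 hne
  have := H.le_dist_of_mem_branch hn (hx n) (hx' n)
  rw [dist_self] at this
  linarith [H.q_lt_u]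

lemma mapsTo_iterate_fiber (m : ℕ) : MapsTo g^[m] (H.fiber s) (H.fiber fun i => s (i + m)) :=
  fun x hx n => by rw [← iterate_add_apply]; exact hx (n + m)

lemma image_fiber : g '' H.fiber s = H.fiber fun i => s (i + 1) := by
  refine (H.mapsTo_iterate_fiber s 1).image_subset.antisymm fun y hy => ?_
  obtain ⟨x, hx, rfl⟩ := H.subset_image_branch (s 0) (H.fiber_subset_Icc _ hy)
  refine ⟨x, fun n => ?_, rfl⟩
  cases n with
  | zero => exact hx
  | succ n => exact hy n

lemma injOn_iterate_fiber (m : ℕ) : InjOn g^[m] (H.fiber s) := by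
  induction m generalizing s with
  | zero => exact injOn_id _
  | succ m ih =>
    rw [iterate_succ]
    exact (ih _).comp ((H.injOn_branch _).mono (H.fiber_subset_branch s))
      (H.mapsTo_iterate_fiber s 1)

lemma ordConnected_fiber : (H.fiber s).OrdConnected := by
  refine ⟨fun x hx z hz y hy n => ?_⟩
  suffices h : g^[n] y ∈ uIcc (g^[n] x) (g^[n] z) from
    (H.ordConnected_branch _).uIcc_subset (hx n) (hz n) h
  induction n with
  | zero => exact Icc_subset_uIcc hy
  | succ n ih =>
    have hsub := (H.ordConnected_branch (s n)).uIcc_subset (hx n) (hz n)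
    simp only [iterate_succ_apply']
    rcases H.strictMonoOn_or_strictAntiOn_branch (s n) with hmono | hanti
    · exact (hmono.monotoneOn.mono hsub).mapsTo_uIcc ih
    · exact (hanti.antitoneOn.mono hsub).mapsTo_uIcc ih

lemma subset_Ioo_of_mem_fiber {x a b : ℝ} (hx : x ∈ H.fiber s) (hax : a < x) (hxb : x < b)
    (ha : a ∉ H.fiber s) (hb : b ∉ H.fiber s) : H.fiber s ⊆ Ioo a b := by
  refine fun z hz => ⟨lt_of_not_ge fun hza => ha ?_, lt_of_not_ge fun hbz => hb ?_⟩
  · exact (H.ordConnected_fiber s).out hz hx ⟨hza, hax.le⟩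
  · exact (H.ordConnected_fiber s).out hx hz ⟨hxb.le, hbz⟩

end Fiber

section Cylinder

variable (s : ℕ → Bool)

lemma fiber_subset_cylinder (n : ℕ) : H.fiber s ⊆ H.cylinder s n :=
  fun _ hx => ⟨fun i _ => hx i, H.branch_subset_Icc _ (hx n)⟩

lemma cylinder_succ_subset (n : ℕ) : H.cylinder s (n + 1) ⊆ H.cylinder s n :=
  fun _ hx => ⟨fun i hi => hx.1 i (hi.trans n.lt_succ_self),
    H.branch_subset_Icc _ (hx.1 n n.lt_succ_self)⟩

lemma iInter_cylinder : ⋂ n, H.cylinder s n = H.fiber s :=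
  Subset.antisymm (fun _ hx n => (mem_iInter.1 hx (n + 1)).1 n n.lt_succ_self)
    (subset_iInter (H.fiber_subset_cylinder s))

lemma cylinder_congr {s' : ℕ → Bool} {n : ℕ} (h : ∀ i < n, s i = s' i) :
    H.cylinder s n = H.cylinder s' n := by
  ext x
  exact and_congr_left' (forall₂_congr fun i hi => by rw [h i hi])

lemma mem_cylinder_succ_iff {n : ℕ} {x : ℝ} :
    x ∈ H.cylinder s (n + 1) ↔
      x ∈ H.branch (s 0) ∧ g x ∈ H.cylinder (fun i => s (i + 1)) n := by
  simp only [cylinder, mem_ofPred_eq, Nat.forall_lt_succ_left, iterate_succ_apply,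
    iterate_zero_apply, and_assoc]

lemma cylinder_subset_Icc (n : ℕ) : H.cylinder s n ⊆ Icc H.p H.v := by
  cases n with
  | zero => exact fun _ hx => hx.2
  | succ n => exact fun _ hx => H.branch_subset_Icc _ (hx.1 0 n.succ_pos)

lemma isCompact_cylinder (n : ℕ) : IsCompact (H.cylinder s n) := by
  refine isCompact_Icc.of_isClosed_subset ?_ (H.cylinder_subset_Icc s n)
  simp only [cylinder, ofPred_and, ofPred_forall]
  exact (isClosed_iInter fun i => isClosed_iInter fun _ =>
    (H.isClosed_branch _).preimage (H.continuous.iterate i)).inter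
    (isClosed_Icc.preimage (H.continuous.iterate n))

lemma nonempty_cylinder (n : ℕ) : (H.cylinder s n).Nonempty := by
  induction n generalizing s with
  | zero => exact ⟨H.p, fun _ hi => absurd hi (Nat.not_lt_zero _),
      left_mem_Icc.2 (H.p_le_q.trans (H.q_lt_u.le.trans H.u_le_v))⟩
  | succ n ih =>
    obtain ⟨y, hy⟩ := ih fun i => s (i + 1)
    obtain ⟨x, hx, rfl⟩ := H.subset_image_branch (s 0) (H.cylinder_subset_Icc _ n hy)
    exact ⟨x, (H.mem_cylinder_succ_iff s).2 ⟨hx, hy⟩⟩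

lemma nonempty_fiber : (H.fiber s).Nonempty := by
  rw [← H.iInter_cylinder]
  exact IsCompact.nonempty_iInter_of_sequence_nonempty_isCompact_isClosed _
    (H.cylinder_succ_subset s) (H.nonempty_cylinder s) (H.isCompact_cylinder s 0)
    fun n => (H.isCompact_cylinder s n).isClosed

lemma exists_cylinder_subset {U : Set ℝ} (hU : IsOpen U) (h : H.fiber s ⊆ U) :
    ∃ n, H.cylinder s n ⊆ U :=
  exists_subset_nhds_of_isCompact (antitone_nat_of_succ_le (H.cylinder_succ_subset s)).directed_ge
    (H.isCompact_cylinder s) fun _ hx => hU.mem_nhds (h (H.iInter_cylinder s ▸ hx))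

end Cylinder

section Endpoints

lemma exists_mem_fiber_of_mem_endpoints {x : ℝ} (hx : x ∈ H.endpoints) :
    ∃ s, x ∈ H.fiber s :=
  hx.imp fun _ hs => hs.elim (·.1) (·.1)

lemma mem_endpoints_iff {s : ℕ → Bool} {x : ℝ} (hx : x ∈ H.fiber s) :
    x ∈ H.endpoints ↔ IsLeast (H.fiber s) x ∨ IsGreatest (H.fiber s) x := by
  refine ⟨fun ⟨s', hs'⟩ => ?_, fun h => ⟨s, h⟩⟩
  obtain rfl := H.eq_of_mem_fiber s hx (hs'.elim (·.1) (·.1))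
  exact hs'

lemma finite_endpoints_inter_fiber (s : ℕ → Bool) : (H.endpoints ∩ H.fiber s).Finite := by
  refine ((Subsingleton.finite ?_).union (Subsingleton.finite ?_)).subset
    fun x hx => (H.mem_endpoints_iff hx.2).1 hx.1
  · exact fun _ hx _ hy => IsLeast.unique hx hy
  · exact fun _ hx _ hy => IsGreatest.unique hx hy

lemma mapsTo_endpoints : MapsTo g H.endpoints H.endpoints := by
  rintro x ⟨s, hx⟩
  refine ⟨fun i => s (i + 1), ?_⟩
  rw [← H.image_fiber]
  rcases H.strictMonoOn_or_strictAntiOn_branch (s 0) with hmono | hanti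
  · have hm := hmono.monotoneOn.mono (H.fiber_subset_branch s)
    exact hx.imp hm.map_isLeast hm.map_isGreatest
  · have ha := hanti.antitoneOn.mono (H.fiber_subset_branch s)
    exact (hx.imp ha.map_isLeast ha.map_isGreatest).symm

lemma isClosed_iUnion_fiber : IsClosed (⋃ s, H.fiber s) := by
  have : ⋃ s, H.fiber s = ⋂ n, g^[n] ⁻¹' ⋃ a, H.branch a := by
    ext x
    simp only [fiber, mem_iUnion, mem_iInter, mem_preimage, mem_ofPred_eq]
    exact (Classical.skolem (p := fun n a => g^[n] x ∈ H.branch a)).symm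
  rw [this]
  exact isClosed_iInter fun n =>
    (isClosed_iUnion_of_finite H.isClosed_branch).preimage (H.continuous.iterate n)

lemma isClosed_endpoints : IsClosed H.endpoints := by
  refine isClosed_of_closure_subset fun x hx => ?_
  obtain ⟨s, hxs⟩ := mem_iUnion.1 <| H.isClosed_iUnion_fiber.closure_subset_iff.2
    (fun y hy => mem_iUnion.2 (H.exists_mem_fiber_of_mem_endpoints hy)) hx
  rw [H.mem_endpoints_iff hxs]
  by_contra! h
  obtain ⟨a, ha, hax⟩ : ∃ a ∈ H.fiber s, a < x := by
    simpa [IsLeast, lowerBounds, hxs] using h.1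
  obtain ⟨b, hb, hxb⟩ : ∃ b ∈ H.fiber s, x < b := by
    simpa [IsGreatest, upperBounds, hxs] using h.2
  obtain ⟨y, hy, hyE⟩ := mem_closure_iff_nhds.1 hx (Ioo a b) (Ioo_mem_nhds hax hxb)
  have hys : y ∈ H.fiber s := (H.ordConnected_fiber s).out ha hb (Ioo_subset_Icc_self hy)
  rcases (H.mem_endpoints_iff hys).1 hyE with hleast | hgreatest
  · exact (hleast.2 ha).not_gt hy.1
  · exact (hgreatest.2 hb).not_gt hy.2

lemma not_countable_endpoints_inter_cylinder (s : ℕ → Bool) (n : ℕ) :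
    ¬ (H.endpoints ∩ H.cylinder s n).Countable := by
  intro hcount
  choose m hm using fun t => (H.isCompact_fiber t).exists_isLeast (H.nonempty_fiber t)
  have hmaps : MapsTo (fun t => m (takeAppend s n t)) univ (H.endpoints ∩ H.cylinder s n) := by
    refine fun t _ => ⟨⟨_, Or.inl (hm _)⟩, ?_⟩
    rw [H.cylinder_congr s fun i hi => (takeAppend_of_lt s t n hi).symm]
    exact H.fiber_subset_cylinder _ n (hm _).1
  have hinj : InjOn (fun t => m (takeAppend s n t)) univ := by
    intro t _ t' _ (h : m (takeAppend s n t) = m (takeAppend s n t'))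
    have := H.eq_of_mem_fiber _ (hm _).1 (by rw [h]; exact (hm (takeAppend s n t')).1)
    funext i
    simpa only [takeAppend_add] using congrFun this (i + n)
  exact not_countable_nat_to_bool (countable_univ_iff.1 (hmaps.countable_of_injOn hinj hcount))

end Endpoints

end Horseshoe

namespace Horseshoe

variable {g : ℝ → ℝ} (H : Horseshoe g)

section Core

lemma core_subset_endpoints : H.core ⊆ H.endpoints :=
  (condensationPoints_subset_closure _).trans H.isClosed_endpoints.closure_subset

lemma exists_mem_fiber_of_mem_core {x : ℝ} (hx : x ∈ H.core) : ∃ s, x ∈ H.fiber s :=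
  H.exists_mem_fiber_of_mem_endpoints (H.core_subset_endpoints hx)

lemma core_subset_Icc : H.core ⊆ Icc H.p H.v := fun _ hx =>
  (H.exists_mem_fiber_of_mem_core hx).elim fun s hs => H.fiber_subset_Icc s hs

lemma isCompact_core : IsCompact H.core :=
  isCompact_Icc.of_isClosed_subset (isClosed_condensationPoints _) H.core_subset_Icc

lemma nonempty_core_inter_fiber (s : ℕ → Bool) : (H.core ∩ H.fiber s).Nonempty := by
  rw [← H.iInter_cylinder, inter_iInter]
  refine IsCompact.nonempty_iInter_of_sequence_nonempty_isCompact_isClosed _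
    (fun n => inter_subset_inter_right _ (H.cylinder_succ_subset s n)) (fun n => ?_)
    ((H.isCompact_cylinder s 0).inter_left (isClosed_condensationPoints _))
    fun n => (isClosed_condensationPoints _).inter (H.isCompact_cylinder s n).isClosed
  rw [← sdiff_empty (s := H.core ∩ _)]
  exact nonempty_diff_of_not_countable
    (not_countable_condensationPoints_inter (H.not_countable_endpoints_inter_cylinder s n))
    countable_empty

lemma mapsTo_core : MapsTo g H.core H.core := by
  intro x hx U hU hcount
  obtain ⟨s, hxs⟩ := H.exists_mem_fiber_of_mem_core hx
  set V := g ⁻¹' U ∩ ball x (H.u - H.q)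
  have hnear : H.endpoints ∩ V ⊆ H.branch (s 0) := by
    rintro y ⟨hyE, -, hyx⟩
    obtain ⟨t, hyt⟩ := H.exists_mem_fiber_of_mem_endpoints hyE
    by_cases h : t 0 = s 0
    · exact h ▸ H.fiber_subset_branch t hyt
    · exact absurd (H.le_dist_of_mem_branch h (hyt 0) (hxs 0)) (not_le.2 (mem_ball.1 hyx))
  refine hx _ (inter_mem (H.continuous.continuousAt.preimage_mem_nhds hU)
    (ball_mem_nhds x (sub_pos.2 H.q_lt_u))) ?_
  have hmaps : MapsTo g (H.endpoints ∩ V) (H.endpoints ∩ U) :=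
    fun y hy => ⟨H.mapsTo_endpoints hy.1, hy.2.1⟩
  exact hmaps.countable_of_injOn ((H.injOn_branch _).mono hnear) hcount

lemma exists_fiber_subset_ball {x ε : ℝ} (hx : x ∈ H.core) (hε : 0 < ε) :
    ∃ s, H.fiber s ⊆ ball x ε := by
  -- a fiber meeting the ball and avoiding `x ± ε` lies in the ball; the (at most two) fibers
  -- through `x ± ε` carry finitely many endpoints
  set B := ⋃ s ∈ {s | x - ε ∈ H.fiber s} ∪ {s | x + ε ∈ H.fiber s},
    H.endpoints ∩ H.fiber s
  have hB : B.Countable := by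
    refine (Finite.biUnion ?_ fun s _ => H.finite_endpoints_inter_fiber s).countable
    exact (Subsingleton.finite fun s hs t ht => H.eq_of_mem_fiber s hs ht).union
      (Subsingleton.finite fun s hs t ht => H.eq_of_mem_fiber s hs ht)
  obtain ⟨y, ⟨hyE, hyx⟩, hyB⟩ :=
    nonempty_diff_of_not_countable (hx _ (ball_mem_nhds x hε)) hB
  obtain ⟨s, hys⟩ := H.exists_mem_fiber_of_mem_endpoints hyE
  rw [Real.ball_eq_Ioo] at hyx ⊢
  exact ⟨s, H.subset_Ioo_of_mem_fiber s hys hyx.1 hyx.2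
    (fun h => hyB (mem_biUnion (Or.inl h) ⟨hyE, hys⟩))
    (fun h => hyB (mem_biUnion (Or.inr h) ⟨hyE, hys⟩))⟩

lemma exists_mem_core_inter_cylinder_periodicPts (s : ℕ → Bool) (n : ℕ) :
    ∃ e ∈ H.core ∩ H.cylinder s n, e ∈ periodicPts g := by
  set s' : ℕ → Bool := fun i => s (i % (n + 1))
  have hshift : (fun i => s' (i + (n + 1))) = s' := by
    funext i
    simp only [s', Nat.add_mod_right]
  obtain ⟨e, he, hes'⟩ := H.nonempty_core_inter_fiber s'
  refine ⟨e, ⟨he, ?_⟩, ?_⟩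
  · rw [H.cylinder_congr (s' := s') s fun i hi => by
      simp only [s', Nat.mod_eq_of_lt (hi.trans n.lt_succ_self)]]
    exact H.fiber_subset_cylinder s' n hes'
  · have hmaps : MapsTo g^[n + 1] (H.endpoints ∩ H.fiber s') (H.endpoints ∩ H.fiber s') :=
      fun y hy => ⟨H.mapsTo_endpoints.iterate _ hy.1,
        hshift ▸ H.mapsTo_iterate_fiber s' _ hy.2⟩
    exact mem_periodicPts_of_mem_periodicPts_iterate n.succ_pos <|
      (H.finite_endpoints_inter_fiber s').subset_periodicPts hmaps
        ((H.injOn_iterate_fiber s' _).mono inter_subset_right)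
        ⟨H.core_subset_endpoints he, hes'⟩

end Core

theorem isDevaneyChaoticOn_core : IsDevaneyChaoticOn g H.core where
  mapsTo := H.mapsTo_core
  transitive U V hU hV := by
    rintro ⟨x, hxU, hx⟩ ⟨y, hyV, hy⟩
    obtain ⟨εU, hεU, hballU⟩ := Metric.isOpen_iff.1 hU x hxU
    obtain ⟨εV, hεV, hballV⟩ := Metric.isOpen_iff.1 hV y hyV
    obtain ⟨sU, hsU⟩ := H.exists_fiber_subset_ball hx hεU
    obtain ⟨sV, hsV⟩ := H.exists_fiber_subset_ball hy hεV
    obtain ⟨n, hn⟩ := H.exists_cylinder_subset sU isOpen_ball hsU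
    obtain ⟨e, he, hes⟩ := H.nonempty_core_inter_fiber (takeAppend sU (n + 1) sV)
    refine ⟨n + 1, n.succ_pos, e, ⟨hballU (hn (H.cylinder_succ_subset sU n ?_)), he⟩,
      hballV (hsV ?_)⟩
    · rw [H.cylinder_congr sU fun i hi => (takeAppend_of_lt sU sV _ hi).symm]
      exact H.fiber_subset_cylinder _ _ hes
    · simpa only [takeAppend_add] using H.mapsTo_iterate_fiber _ (n + 1) hes
  subset_closure_periodicPts x hx := by
    refine Metric.mem_closure_iff.2 fun ε hε => ?_
    obtain ⟨s, hs⟩ := H.exists_fiber_subset_ball hx hε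
    obtain ⟨n, hn⟩ := H.exists_cylinder_subset s isOpen_ball hs
    obtain ⟨e, he, hper⟩ := H.exists_mem_core_inter_cylinder_periodicPts s n
    exact ⟨e, ⟨he.1, hper⟩, mem_ball'.1 (hn he.2)⟩
  sensitive := by
    have hgap : 0 < H.u - H.q := sub_pos.2 H.q_lt_u
    refine ⟨H.u - H.q, hgap, fun x hx ε hε => ?_⟩
    obtain ⟨s, hxs⟩ := H.exists_mem_fiber_of_mem_core hx
    obtain ⟨y, ⟨hy, hyx⟩, hys⟩ := nonempty_diff_of_not_countable
      (not_countable_condensationPoints_inter (hx _ (ball_mem_nhds x (lt_min hε hgap))))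
      (H.finite_endpoints_inter_fiber s).countable
    obtain ⟨t, hyt⟩ := H.exists_mem_fiber_of_mem_core hy
    obtain ⟨n, hn⟩ := Function.ne_iff.1 fun h : s = t =>
      hys ⟨H.core_subset_endpoints hy, h ▸ hyt⟩
    have hsep := H.le_dist_of_mem_branch hn (hxs n) (hyt n)
    have hxy : dist x y < min ε (H.u - H.q) := mem_ball'.1 hyx
    refine ⟨y, hy, hxy.trans_le (min_le_left _ _), n, Nat.pos_of_ne_zero fun hn0 => ?_, hsep⟩
    subst hn0
    exact (hxy.trans_le (min_le_right _ _)).not_ge hsep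

end Horseshoe

theorem exists_horseshoe_iterate_two {f : ℝ → ℝ} {c : ℝ} (hf : Continuous f)
    (hmono : StrictMonoOn f (Icc (f (f c)) c)) (hanti : StrictAntiOn f (Icc c (f c)))
    (hc : c < f c) (hc2 : f (f c) < c) (hc3 : f (f (f c)) < c) :
    ∃ H : Horseshoe f^[2], Icc H.p H.v ⊆ Icc (f (f c)) (f c) ∧
      MapsTo f (Icc H.p H.v) (Icc (f (f c)) (f c)) := by
  have hf2 : Continuous f^[2] := hf.iterate 2
  obtain ⟨w, hw, hfw⟩ := intermediate_value_Ioo hc2.le hf.continuousOn ⟨hc3, hc⟩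
  obtain ⟨s, hs, hfs⟩ := intermediate_value_Ioo' hc.le hf.continuousOn ⟨hc2, hc⟩
  obtain ⟨t, ht, hft⟩ := intermediate_value_Ioo' hs.2.le hf.continuousOn
    (by rw [hfs]; exact ⟨hw.1, hw.2⟩)
  -- `f^[2]` sends `c ↦ f (f c)`, `s ↦ f c`, `t ↦ c`, hence covers `[c, t]` twice
  have hg2 : f^[2] s = f c := by rw [iterate_succ_apply, hfs, iterate_one]
  have hgt : f^[2] t = c := by rw [iterate_succ_apply, hft, iterate_one, hfw]
  obtain ⟨β, hβ, hgβ⟩ := intermediate_value_Ioo hs.1.le hf2.continuousOn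
    (show t ∈ Ioo (f^[2] c) (f^[2] s) by rw [hg2]; exact ⟨hc2.trans (hs.1.trans ht.1), ht.2⟩)
  obtain ⟨α, hα, hgα⟩ := intermediate_value_Ioo' ht.1.le hf2.continuousOn
    (show t ∈ Ioo (f^[2] t) (f^[2] s) by rw [hg2, hgt]; exact ⟨hs.1.trans ht.1, ht.2⟩)
  have hct : Icc c t ⊆ Icc c (f c) := Icc_subset_Icc le_rfl ht.2.le
  have hanti' : StrictAntiOn f (Icc c t) := hanti.mono hct
  have hleft : MapsTo f (Icc c s) (Icc c (f c)) := by
    simpa only [hfs] using (hanti'.mono (Icc_subset_Icc_right ht.1.le)).antitoneOn.mapsTo_Icc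
  have hright : MapsTo f (Icc s t) (Icc (f (f c)) c) := by
    have := (hanti'.mono (Icc_subset_Icc_left hs.1.le)).antitoneOn.mapsTo_Icc
    rw [hfs, hft] at this
    exact this.mono_right (Icc_subset_Icc_left hw.1.le)
  have hmono_left : StrictMonoOn f^[2] (Icc c β) :=
    hanti.comp (hanti'.mono (Icc_subset_Icc_right (hβ.2.trans ht.1).le))
      (hleft.mono_left (Icc_subset_Icc_right hβ.2.le))
  have hanti_right : StrictAntiOn f^[2] (Icc α t) :=
    hmono.comp_strictAntiOn (hanti'.mono (Icc_subset_Icc_left (hs.1.trans hα.1).le))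
      (hright.mono_left (Icc_subset_Icc_left hα.1.le))
  refine ⟨⟨c, β, α, t, hβ.1.le, hβ.2.trans hα.1, hα.2.le, hf2, Or.inl hmono_left,
    Or.inr hanti_right, ?_, ?_⟩, hct.trans (Icc_subset_Icc hc2.le le_rfl),
    hanti.antitoneOn.mapsTo_Icc.mono_left hct⟩
  · refine (Icc_subset_Icc_left hc2.le).trans ?_
    have hgc : f^[2] c = f (f c) := rfl
    simpa only [hgβ, hgc] using intermediate_value_Icc hβ.1.le hf2.continuousOn
  · simpa only [hgα, hgt] using intermediate_value_Icc' hα.2.le hf2.continuousOn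

noncomputable def chialvo (r k x : ℝ) : ℝ := x ^ 2 * Real.exp (r - x) + k

section Chialvo

variable (r k : ℝ)

lemma continuous_chialvo : Continuous (chialvo r k) := by
  unfold chialvo
  fun_prop

lemma hasDerivAt_chialvo (x : ℝ) :
    HasDerivAt (chialvo r k) ((2 * x - x ^ 2) * Real.exp (r - x)) x := by
  have hpow : HasDerivAt (fun x : ℝ => x ^ 2) (2 * x) x := by simpa using hasDerivAt_pow 2 x
  have hexp : HasDerivAt (fun x => Real.exp (r - x)) (Real.exp (r - x) * -1) x :=
    ((hasDerivAt_id x).const_sub r).exp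
  exact ((hpow.mul hexp).add_const k).congr_deriv (by ring)

lemma strictMonoOn_chialvo : StrictMonoOn (chialvo r k) (Icc 0 2) := by
  refine strictMonoOn_of_deriv_pos (convex_Icc 0 2) (continuous_chialvo r k).continuousOn
    fun x hx => ?_
  rw [interior_Icc] at hx
  rw [(hasDerivAt_chialvo r k x).deriv]
  exact mul_pos (by nlinarith [hx.1, hx.2]) (Real.exp_pos _)

lemma strictAntiOn_chialvo : StrictAntiOn (chialvo r k) (Ici 2) := by
  refine strictAntiOn_of_deriv_neg (convex_Ici 2) (continuous_chialvo r k).continuousOn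
    fun x hx => ?_
  rw [interior_Ici] at hx
  rw [(hasDerivAt_chialvo r k x).deriv]
  exact mul_neg_of_neg_of_pos (by nlinarith [mem_Ioi.1 hx]) (Real.exp_pos _)

lemma le_chialvo (x : ℝ) : k ≤ chialvo r k x :=
  le_add_of_nonneg_left (mul_nonneg (sq_nonneg x) (Real.exp_pos _).le)

end Chialvo

/-- Devaney chaos for the 1D Chialvo map. Let `k ≥ 0`, `r ∈ ℝ` and `f = f_{r,k}`,
`f(x) = x² exp(r − x) + k`, satisfy `f²(2) < f³(2) < 2 < f(2)`. Then `f` is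
chaotic in the sense of Devaney on `I = [f²(2), f(2)]`: there is a nonempty
compact `f`-invariant set `Y ⊆ I` on which `f` is topologically transitive,
has a dense set of periodic points, and has sensitive dependence on initial
conditions. -/
theorem chialvo_devaney_chaos (k r : ℝ) (hk : 0 ≤ k)
    (f : ℝ → ℝ) (hf : f = fun x : ℝ => x ^ 2 * Real.exp (r - x) + k)
    (h1 : f (f 2) < f (f (f 2))) (h2 : f (f (f 2)) < 2) (h3 : 2 < f 2) :
    ∃ Y : Set ℝ, Y.Nonempty ∧ IsCompact Y ∧ Y ⊆ Set.Icc (f (f 2)) (f 2) ∧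
      Set.MapsTo f Y Y ∧
      (∀ U V : Set ℝ, IsOpen U → IsOpen V → (U ∩ Y).Nonempty → (V ∩ Y).Nonempty →
        ∃ n : ℕ, ∃ x ∈ U ∩ Y, f^[n] x ∈ V ∩ Y) ∧
      (∀ y ∈ Y, ∀ ε > (0 : ℝ), ∃ p ∈ Y, (∃ n : ℕ, 1 ≤ n ∧ f^[n] p = p) ∧ |y - p| < ε) ∧
      (∃ δ > (0 : ℝ), ∀ x ∈ Y, ∀ ε > (0 : ℝ), ∃ y ∈ Y, ∃ n : ℕ,
        |x - y| < ε ∧ δ ≤ |f^[n] x - f^[n] y|) := by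
  obtain rfl : f = chialvo r k := hf
  have hc := continuous_chialvo r k
  obtain ⟨H, hsub, hmaps⟩ := exists_horseshoe_iterate_two hc
    ((strictMonoOn_chialvo r k).mono (Icc_subset_Icc (hk.trans (le_chialvo r k _)) le_rfl))
    ((strictAntiOn_chialvo r k).mono Icc_subset_Ici_self) h3 (h1.trans h2) h2
  have hY := H.isDevaneyChaoticOn_core.of_iterate_two hc
  refine ⟨H.core ∪ chialvo r k '' H.core,
    ((H.nonempty_core_inter_fiber fun _ => false).mono inter_subset_left).inl,
    H.isCompact_core.union (H.isCompact_core.image hc), ?_, hY.mapsTo, ?_, ?_, ?_⟩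
  · exact union_subset (H.core_subset_Icc.trans hsub)
      (hmaps.mono_left H.core_subset_Icc).image_subset
  · intro U V hU hV hUY hVY
    obtain ⟨n, -, x, hx, hxV⟩ := hY.transitive U V hU hV hUY hVY
    exact ⟨n, x, hx, hxV, hY.mapsTo.iterate n hx.2⟩
  · intro y hy ε hε
    obtain ⟨p, ⟨hp, n, hn, hper⟩, hyp⟩ :=
      Metric.mem_closure_iff.1 (hY.subset_closure_periodicPts hy) ε hε
    exact ⟨p, hp, ⟨n, hn, hper⟩, by rwa [← Real.dist_eq]⟩
  · obtain ⟨δ, hδ, hsens⟩ := hY.sensitive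
    refine ⟨δ, hδ, fun x hx ε hε => ?_⟩
    obtain ⟨y, hy, hxy, n, -, hsep⟩ := hsens x hx ε hε
    exact ⟨y, hy, n, by rwa [← Real.dist_eq], by rwa [← Real.dist_eq]⟩
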